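/- arXiv:2402.01965 — 7 statements merged into one kernel-verified Lean document; each statement's English description precedes it below -/
import Mathlib

section
/- For a single data point x = 1 and a single hidden neuron, the regularized score-matching objective f(w, α, b, b₀) = ½((w + b)₊·α + b₀)² + w·α·𝟙{w + b ≥ 0} + (β/2)(w² + α²) is unbounded below whenever 0 ≤ β < 1; specifically, choosing b = −w + √(1−β), b₀ = 0, α = −w gives objective value (β−1)w²/2, which tends to −∞ as w → ∞. -/
open Filter

noncomputable def scoreMatchingObjective (β w α b b₀ : ℝ) : ℝ :=
  (1/2) * (max (w + b) 0 * α + b₀)^2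
    + w * α * (if 0 ≤ w + b then (1:ℝ) else 0)
    + (β/2) * (w^2 + α^2)

/-- With the neuron active at pre-activation `√(1-β)` and `α = -w`, the squared term equals
`(1-β) w² / 2` and the indicator term `-w²` dominates it. -/
theorem scoreMatchingObjective_at_sqrt_one_sub {β : ℝ} (hβ : β ≤ 1) (w : ℝ) :
    scoreMatchingObjective β w (-w) (-w + Real.sqrt (1 - β)) 0 = (β - 1) * w^2 / 2 := by
  have hs : 0 ≤ Real.sqrt (1 - β) := Real.sqrt_nonneg _
  have hsq : Real.sqrt (1 - β) ^ 2 = 1 - β := Real.sq_sqrt (by linarith)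
  rw [scoreMatchingObjective, add_neg_cancel_left, max_eq_left hs, if_pos hs]
  linear_combination (1/2 : ℝ) * w^2 * hsq

theorem tendsto_mul_sq_div_two_atBot {c : ℝ} (hc : c < 0) :
    Tendsto (fun w : ℝ => c * w^2 / 2) atTop atBot :=
  ((tendsto_pow_atTop two_ne_zero).const_mul_atTop_of_neg hc).atBot_div_const two_pos

theorem stmt_0_general (β : ℝ) (hβ1 : β < 1)
    (f : ℝ → ℝ → ℝ → ℝ → ℝ)
    (hf : ∀ w α b b₀, f w α b b₀ =
      (1/2) * (max (w + b) 0 * α + b₀)^2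
        + w * α * (if 0 ≤ w + b then (1:ℝ) else 0)
        + (β/2) * (w^2 + α^2)) :
    (∀ w : ℝ, f w (-w) (-w + Real.sqrt (1 - β)) 0 = (β - 1) * w^2 / 2) ∧
    (∀ M : ℝ, ∃ w α b b₀ : ℝ, f w α b b₀ < M) ∧
    Filter.Tendsto (fun w : ℝ => (β - 1) * w^2 / 2) Filter.atTop Filter.atBot := by
  have witness : ∀ w : ℝ, f w (-w) (-w + Real.sqrt (1 - β)) 0 = (β - 1) * w^2 / 2 :=
    fun w => (hf ..).trans (scoreMatchingObjective_at_sqrt_one_sub hβ1.le w)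
  have tendsto := tendsto_mul_sq_div_two_atBot (sub_neg.mpr hβ1)
  refine ⟨witness, fun M => ?_, tendsto⟩
  obtain ⟨w, hw⟩ := (tendsto.eventually_lt_atBot M).exists
  exact ⟨w, -w, -w + Real.sqrt (1 - β), 0, (witness w).trans_lt hw⟩

/-- For a single data point `x = 1` and a single hidden neuron, the regularized
score-matching objective
`f (w, α, b, b₀) = ½((w+b)₊ α + b₀)² + w α 𝟙{w+b ≥ 0} + (β/2)(w² + α²)`
is unbounded below whenever `0 ≤ β < 1`; choosing `b = -w + √(1-β)`, `b₀ = 0`,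
`α = -w` gives value `(β-1) w² / 2`, which tends to `-∞` as `w → ∞`. -/
theorem stmt_0 (β : ℝ) (hβ0 : 0 ≤ β) (hβ1 : β < 1)
    (f : ℝ → ℝ → ℝ → ℝ → ℝ)
    (hf : ∀ w α b b₀, f w α b b₀ =
      (1/2) * (max (w + b) 0 * α + b₀)^2
        + w * α * (if 0 ≤ w + b then (1:ℝ) else 0)
        + (β/2) * (w^2 + α^2)) :
    (∀ w : ℝ, f w (-w) (-w + Real.sqrt (1 - β)) 0 = (β - 1) * w^2 / 2) ∧
    (∀ M : ℝ, ∃ w α b b₀ : ℝ, f w α b b₀ < M) ∧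
    Filter.Tendsto (fun w : ℝ => (β - 1) * w^2 / 2) Filter.atTop Filter.atBot :=
  stmt_0_general β hβ1 f hf
end

section
/- Let x₁ < x₂ < ⋯ < xₙ be real numbers and x = (x₁,…,xₙ) ∈ ℝⁿ. If z ∈ ℝⁿ strictly satisfies all the constraints |zᵀ|x − 1·xᵢ| − 1ᵀsign(x − 1·xᵢ)| < β and |zᵀ|−x + 1·xᵢ| + 1ᵀsign(−x + 1·xᵢ)| < β for all i = 1,…,n, together with zᵀ1 = 0, then β > 1. (Here |v| and sign(v) apply elementwise, sign(t) = 1 for t ≥ 0 and −1 for t < 0, and 1 is the all-ones vector.) -/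
/-!
Evaluate both constraints at the index `i` of the smallest entry `x i`. There `x - 1xᵢ ≥ 0`, so
`1ᵀ sign(x - 1xᵢ) = n`, while `-x + 1xᵢ < 0` off `i`, so `1ᵀ sign(-x + 1xᵢ) = 2 - n`. Both
constraints involve the same number `s = zᵀ|x - 1xᵢ|`, and they say that `s - n` and `s - n + 2`
both lie in `(-β, β)`, which forces `2 < 2β`.
-/

/-- Elementwise sign function with `sgn t = 1` for `t ≥ 0` and `-1` otherwise. -/
noncomputable def sgn (t : ℝ) : ℝ := if 0 ≤ t then 1 else -1

open Finset

lemma sgn_of_nonneg {t : ℝ} (ht : 0 ≤ t) : sgn t = 1 := if_pos ht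

lemma sgn_of_neg {t : ℝ} (ht : t < 0) : sgn t = -1 := if_neg ht.not_ge

section Fintype

variable {ι : Type*} [Fintype ι] (x : ι → ℝ) (i : ι)

lemma sum_sgn_sub_of_forall_le (hi : ∀ j, x i ≤ x j) :
    ∑ j, sgn (x j - x i) = Fintype.card ι := by
  simp [sgn_of_nonneg, hi]

lemma sum_sgn_sub_of_forall_lt [DecidableEq ι] (hi : ∀ j, j ≠ i → x i < x j) :
    ∑ j, sgn (x i - x j) = 2 - Fintype.card ι := by
  have h_off : ∀ j ∈ ({i} : Finset ι)ᶜ, sgn (x i - x j) = -1 := fun j hj =>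
    sgn_of_neg (sub_neg.mpr (hi j (by simpa using hj)))
  rw [← sum_compl_add_sum {i}, sum_congr rfl h_off, sum_singleton, sub_self, sgn_of_nonneg le_rfl,
    sum_const, card_compl, card_singleton, nsmul_eq_mul,
    Nat.cast_sub (Fintype.card_pos_iff.mpr ⟨i⟩)]
  push_cast
  ring

end Fintype

lemma one_lt_of_abs_lt_of_abs_add_two_lt {a β : ℝ} (h : |a| < β) (h' : |a + 2| < β) : 1 < β := by
  rw [abs_lt] at h h'
  linarith [h.1, h'.2]

theorem stmt_1_general (n : ℕ) (hn : 0 < n) (x z : Fin n → ℝ) (hx : StrictMono x)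
    (β : ℝ)
    (h1 : ∀ i : Fin n, |(∑ j, z j * |x j - x i|) - ∑ j, sgn (x j - x i)| < β)
    (h2 : ∀ i : Fin n, |(∑ j, z j * |-(x j) + x i|) + ∑ j, sgn (-(x j) + x i)| < β) :
    1 < β := by
  set i : Fin n := ⟨0, hn⟩
  have hi_le : ∀ j, i ≤ j := fun j => Nat.zero_le j
  have h_up := h1 i
  have h_down := h2 i
  rw [sum_sgn_sub_of_forall_le x i fun j => hx.monotone (hi_le j), Fintype.card_fin] at h_up
  simp only [neg_add_eq_sub, abs_sub_comm (x i)] at h_down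
  rw [sum_sgn_sub_of_forall_lt x i fun j hj => hx (lt_of_le_of_ne (hi_le j) hj.symm),
    Fintype.card_fin] at h_down
  exact one_lt_of_abs_lt_of_abs_add_two_lt h_up (by convert h_down using 2; ring)

/-- If `x₁ < ⋯ < xₙ` and `z` strictly satisfies all the constraints
`|zᵀ|x - 1xᵢ| - 1ᵀ sign(x - 1xᵢ)| < β` and
`|zᵀ|-x + 1xᵢ| + 1ᵀ sign(-x + 1xᵢ)| < β` for all `i`, together with
`zᵀ1 = 0`, then `β > 1`. -/
theorem stmt_1 (n : ℕ) (hn : 0 < n) (x z : Fin n → ℝ) (hx : StrictMono x)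
    (β : ℝ)
    (hz : ∑ j, z j = 0)
    (h1 : ∀ i : Fin n, |(∑ j, z j * |x j - x i|) - ∑ j, sgn (x j - x i)| < β)
    (h2 : ∀ i : Fin n, |(∑ j, z j * |-(x j) + x i|) + ∑ j, sgn (-(x j) + x i)| < β) :
    1 < β :=
  stmt_1_general n hn x z hx β h1 h2
end

section
/- Let x₁ < x₂ < ⋯ < xₙ be real numbers and x ∈ ℝⁿ. Taking i = 1 and i = n in the constraint |zᵀ|x − 1·xᵢ| − 1ᵀsign(x − 1·xᵢ)| ≤ β yields |zᵀx − zᵀ1·x₁ − n| ≤ β and, using zᵀ1 = 0, |zᵀx − (n − 2)| ≤ β; consequently any z with zᵀ1 = 0 satisfying both constraints strictly must satisfy β > 1. -/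
/-- For strictly increasing data `x₁ < ⋯ < xₙ`, taking `i = 1` and `i = n` in the
strict constraint `|zᵀ|x - 1xᵢ| - 1ᵀ sign(x - 1xᵢ)| < β` yields (using `zᵀ1 = 0`)
`|zᵀx - n| < β` and `|zᵀx - (n-2)| < β`; consequently `β > 1`. -/
theorem stmt_2 (n : ℕ) (hn : 0 < n) (x z : Fin n → ℝ) (hx : StrictMono x)
    (β : ℝ)
    (hz : ∑ j, z j = 0)
    (hfirst :
      |(∑ j, z j * |x j - x ⟨0, hn⟩|) - ∑ j, sgn (x j - x ⟨0, hn⟩)| < β)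
    (hlast :
      |(∑ j, z j * |x j - x ⟨n - 1, Nat.sub_lt hn one_pos⟩|)
        - ∑ j, sgn (x j - x ⟨n - 1, Nat.sub_lt hn one_pos⟩)| < β) :
    |(∑ j, z j * x j) - n| < β ∧ |(∑ j, z j * x j) - ((n : ℝ) - 2)| < β ∧ 1 < β := by
  set i0 : Fin n := ⟨0, hn⟩ with hi0
  set iN : Fin n := ⟨n - 1, Nat.sub_lt hn one_pos⟩ with hiN
  have h0le : ∀ j : Fin n, x i0 ≤ x j := fun j =>
    hx.monotone (by simp [hi0, Fin.le_def])
  have hNge : ∀ j : Fin n, x j ≤ x iN := fun j =>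
    hx.monotone (by simp only [Fin.le_def, hiN]; omega)
  -- first constraint
  have e1 : (∑ j, z j * |x j - x i0|) = ∑ j, z j * x j := by
    rw [show (∑ j, z j * |x j - x i0|) = ∑ j, (z j * x j - z j * x i0) from
      Finset.sum_congr rfl fun j _ => by
        rw [abs_of_nonneg (by linarith [h0le j])]; ring]
    rw [Finset.sum_sub_distrib, ← Finset.sum_mul, hz]
    ring
  have e2 : (∑ j, sgn (x j - x i0)) = (n : ℝ) := by
    rw [show (∑ j, sgn (x j - x i0)) = ∑ _j : Fin n, (1 : ℝ) from
      Finset.sum_congr rfl fun j _ => by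
        simp [sgn, sub_nonneg.2 (h0le j)]]
    simp
  have h1 : |(∑ j, z j * x j) - n| < β := by rwa [e1, e2] at hfirst
  -- last constraint
  have e3 : (∑ j, z j * |x j - x iN|) = -∑ j, z j * x j := by
    rw [show (∑ j, z j * |x j - x iN|) = ∑ j, (z j * x iN - z j * x j) from
      Finset.sum_congr rfl fun j _ => by
        rw [abs_of_nonpos (by linarith [hNge j])]; ring]
    rw [Finset.sum_sub_distrib, ← Finset.sum_mul, hz]
    ring
  have e4 : (∑ j, sgn (x j - x iN)) = 2 - (n : ℝ) := by
    rw [show (∑ j, sgn (x j - x iN)) = ∑ j : Fin n, ((if j = iN then (2:ℝ) else 0) - 1) from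
      Finset.sum_congr rfl fun j _ => by
        by_cases hj : j = iN
        · simp [sgn, hj]; norm_num
        · have hlt : x j < x iN := lt_of_le_of_ne (hNge j) (fun h => hj (hx.injective h))
          simp [sgn, hj, not_le.2 (by linarith : x j - x iN < 0)]]
    rw [Finset.sum_sub_distrib, Finset.sum_ite_eq' Finset.univ iN fun _ => (2:ℝ)]
    simp
  have h2 : |(∑ j, z j * x j) - ((n : ℝ) - 2)| < β := by
    rw [e3, e4] at hlast
    rw [show (∑ j, z j * x j) - ((n : ℝ) - 2) =
      -((-∑ j, z j * x j) - (2 - (n : ℝ))) by ring, abs_neg]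
    exact hlast
  refine ⟨h1, h2, ?_⟩
  have a1 := abs_lt.1 h1
  have a2 := abs_lt.1 h2
  linarith [a1.1, a2.2]
end

section
/- Let x₁ < ⋯ < xₙ be real numbers and x ∈ ℝⁿ, with the convention sign(0) = 1. If z ∈ ℝⁿ satisfies zᵀ1 = 0, zᵀx = n, and strictly satisfies |zᵀ|x − 1·xᵢ| − 1ᵀsign(x − 1·xᵢ)| < β for all i, then β > 2. -/
/-- If `x₁ < ⋯ < xₙ`, `zᵀ1 = 0`, `zᵀx = n`, and `z` strictly satisfies
`|zᵀ|x - 1xᵢ| - 1ᵀ sign(x - 1xᵢ)| < β` for all `i`, then `β > 2`. -/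
theorem stmt_3 (n : ℕ) (hn : 0 < n) (x z : Fin n → ℝ) (hx : StrictMono x)
    (β : ℝ)
    (hz1 : ∑ j, z j = 0)
    (hzx : ∑ j, z j * x j = n)
    (h : ∀ i : Fin n, |(∑ j, z j * |x j - x i|) - ∑ j, sgn (x j - x i)| < β) :
    2 < β := by
  set i : Fin n := ⟨n - 1, by omega⟩ with hi
  have hle : ∀ j : Fin n, x j ≤ x i := by
    intro j
    exact hx.monotone (by simp [hi, Fin.le_def]; omega)
  have h1 : (∑ j, z j * |x j - x i|) = -(n : ℝ) := by
    have : ∀ j : Fin n, z j * |x j - x i| = z j * x i - z j * x j := by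
      intro j
      rw [abs_of_nonpos (by linarith [hle j])]
      ring
    rw [Finset.sum_congr rfl fun j _ => this j, Finset.sum_sub_distrib,
      ← Finset.sum_mul, hz1, hzx]
    ring
  have h2 : (∑ j, sgn (x j - x i)) = 2 - (n : ℝ) := by
    have : ∀ j : Fin n, sgn (x j - x i) = if j = i then 1 else -1 := by
      intro j
      rcases eq_or_ne j i with rfl | hne
      · simp [sgn]
      · have hlt : j < i := by
          have hj := j.isLt
          have : j.val ≠ n - 1 := fun hh => hne (Fin.ext (by simp [hi, hh]))
          simp [hi, Fin.lt_def]; omega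
        have hxx : x j < x i := hx hlt
        rw [if_neg hne]
        unfold sgn
        rw [if_neg (by linarith)]
    rw [Finset.sum_congr rfl fun j _ => this j]
    have h3 : ∀ j : Fin n, (if j = i then (1:ℝ) else -1) = (if j = i then (2:ℝ) else 0) - 1 := by
      intro j; split <;> norm_num
    rw [Finset.sum_congr rfl fun j _ => h3 j, Finset.sum_sub_distrib,
      Finset.sum_ite_eq' _ i]
    simp
  have hβ := h i
  rw [h1, h2] at hβ
  have key : (-(n:ℝ)) - (2 - n) = -2 := by ring
  rw [key] at hβ
  norm_num at hβ
  linarith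
end

section
/- Let x₁,…,xₙ ∈ ℝ with sample mean μ = (1/n)Σxᵢ and sample variance v = (1/n)Σ(xᵢ−μ)² > 0, and let β ∈ ℝ with β ≤ n. Define the piecewise-linear function ŷ on ℝ by ŷ(x) = ((β−n)/(nv))·(x−μ) for x₁ ≤ x ≤ xₙ, ŷ(x) = −((n−β)/(2nv) + t)·x + ((β−n)/(2nv) + t)·x₁ + ((n−β)/(nv))·μ for x < x₁, and ŷ(x) = ((β−n)/(2nv) + t)·x − ((n−β)/(2nv) + t)·xₙ + ((n−β)/(nv))·μ for x > xₙ, where |t| ≤ (n−β)/(2nv). Then ŷ is continuous, non-increasing on ℝ, and any antiderivative of ŷ is a concave function on ℝ. -/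
/-- The score predicted by the optimally trained two-layer ReLU network:
piecewise linear, equal to `((β-n)/(nv))(x-μ)` on the data range and linearly
extended outside with slopes `-((n-β)/(2nv)+t)` and `((β-n)/(2nv)+t)`, where
`|t| ≤ (n-β)/(2nv)`. This function is continuous, non-increasing, and every
antiderivative of it is concave on `ℝ`. -/
theorem stmt_7 (n : ℕ) (hn : 0 < n) (x : Fin n → ℝ) (hmono : Monotone x)
    (μ v β t : ℝ)
    (hμ : μ = (∑ i, x i) / n) (hv : v = (∑ i, (x i - μ)^2) / n)
    (hvpos : 0 < v) (hβ : β ≤ n) (ht : |t| ≤ (n - β) / (2 * n * v))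
    (f : ℝ → ℝ)
    (hmid : ∀ s : ℝ, x ⟨0, hn⟩ ≤ s → s ≤ x ⟨n - 1, Nat.sub_lt hn one_pos⟩ →
      f s = (β - n) / (n * v) * (s - μ))
    (hleft : ∀ s : ℝ, s < x ⟨0, hn⟩ →
      f s = -((n - β) / (2 * n * v) + t) * s
        + ((β - n) / (2 * n * v) + t) * x ⟨0, hn⟩ + (n - β) / (n * v) * μ)
    (hright : ∀ s : ℝ, x ⟨n - 1, Nat.sub_lt hn one_pos⟩ < s →
      f s = ((β - n) / (2 * n * v) + t) * s
        - ((n - β) / (2 * n * v) + t) * x ⟨n - 1, Nat.sub_lt hn one_pos⟩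
        + (n - β) / (n * v) * μ) :
    Continuous f ∧ Antitone f ∧
      ∀ F : ℝ → ℝ, (∀ s, HasDerivAt F (f s) s) → ConcaveOn ℝ Set.univ F := by
  set a := x ⟨0, hn⟩ with ha
  set b := x ⟨n - 1, Nat.sub_lt hn one_pos⟩ with hb
  have hab : a ≤ b := hmono (Fin.mk_le_mk.mpr (Nat.zero_le _))
  have hnpos : (0:ℝ) < n := Nat.cast_pos.mpr hn
  have hn0 : (n:ℝ) ≠ 0 := ne_of_gt hnpos
  have hv0 : v ≠ 0 := ne_of_gt hvpos
  set c : ℝ := (β - n) / (n * v) with hcdef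
  set L : ℝ := -((n - β) / (2 * n * v) + t) with hLdef
  set R : ℝ := (β - n) / (2 * n * v) + t with hRdef
  have habs := abs_le.mp ht
  have hc : c ≤ 0 := by
    rw [hcdef]
    exact div_nonpos_iff.mpr (Or.inr ⟨by linarith, le_of_lt (by positivity)⟩)
  have hL : L ≤ 0 := by
    rw [hLdef]
    have : (0:ℝ) ≤ (n - β) / (2 * n * v) + t := by linarith [habs.1]
    linarith
  have hR : R ≤ 0 := by
    have h1 : (β - n) / (2 * n * v) = -((n - β) / (2 * n * v)) := by
      rw [← neg_div]; ring_nf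
    rw [hRdef, h1]
    linarith [habs.2]
  set g : ℝ → ℝ := fun s =>
    c * (max a (min s b) - μ) + L * min (s - a) 0 + R * max (s - b) 0 with hgdef
  have hfg : f = g := by
    funext s
    rcases lt_or_ge s a with hs | hsa
    · have h1 : min s b = s := min_eq_left (hs.le.trans hab)
      have h2 : max a s = a := max_eq_left hs.le
      have h3 : min (s - a) 0 = s - a := min_eq_left (by linarith)
      have h4 : max (s - b) 0 = 0 := max_eq_right (by linarith)
      rw [hleft s hs, hgdef]
      simp only [h1, h2, h3, h4]
      rw [hcdef, hLdef, hRdef]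
      field_simp
      ring
    · rcases le_or_gt s b with hsb | hs
      · have h1 : min s b = s := min_eq_left hsb
        have h2 : max a s = s := max_eq_right hsa
        have h3 : min (s - a) 0 = 0 := min_eq_right (by linarith)
        have h4 : max (s - b) 0 = 0 := max_eq_right (by linarith)
        rw [hmid s hsa hsb, hgdef]
        simp only [h1, h2, h3, h4]
        ring
      · have h1 : min s b = b := min_eq_right hs.le
        have h2 : max a b = b := max_eq_right hab
        have h3 : min (s - a) 0 = 0 := min_eq_right (by linarith)
        have h4 : max (s - b) 0 = s - b := max_eq_left (by linarith)
        rw [hright s hs, hgdef]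
        simp only [h1, h2, h3, h4]
        rw [hcdef, hLdef, hRdef]
        field_simp
        ring
  have hgcont : Continuous g := by
    rw [hgdef]
    fun_prop
  have hganti : Antitone g := by
    have m1 : Monotone fun s : ℝ => max a (min s b) - μ := fun p q h => by
      simp only
      gcongr
    have m2 : Monotone fun s : ℝ => min (s - a) 0 := fun p q h => by
      simp only
      gcongr
    have m3 : Monotone fun s : ℝ => max (s - b) 0 := fun p q h => by
      simp only
      gcongr
    intro p q h
    have i1 := mul_le_mul_of_nonpos_left (m1 h) hc
    have i2 := mul_le_mul_of_nonpos_left (m2 h) hL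
    have i3 := mul_le_mul_of_nonpos_left (m3 h) hR
    simp only [hgdef]
    dsimp at i1 i2 i3 ⊢
    linarith
  have hfcont : Continuous f := hfg ▸ hgcont
  have hfanti : Antitone f := hfg ▸ hganti
  refine ⟨hfcont, hfanti, fun F hF => ?_⟩
  have hdiff : Differentiable ℝ F := fun s => (hF s).differentiableAt
  have hderiv : deriv F = f := funext fun s => (hF s).deriv
  exact Antitone.concaveOn_univ_of_deriv hdiff (hderiv ▸ hfanti)
end

section
/- Let x₁,…,xₙ ∈ ℝ with sample mean μ and sample variance v > 0, β < n, and t ∈ ℝ with 0 < t ≤ (n−β)/(2nv). Define ŷ(x) = ((β−n)/(nv))(x−μ) for x₁ ≤ x ≤ xₙ, ŷ(x) = −2t·x + ((β−n)/(nv) + 2t)x₁ + ((n−β)/(nv))μ for x < x₁, and ŷ(x) = 2t·x − ((n−β)/(nv) + 2t)xₙ + ((n−β)/(nv))μ for x > xₙ. Then ŷ is continuous but not non-increasing on ℝ (it is strictly increasing on (xₙ, ∞)); hence no antiderivative of ŷ is concave on ℝ. -/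
/-- The score predicted by the optimally trained two-layer absolute-value
network without skip connection, with `0 < t ≤ (n-β)/(2nv)`: it is continuous
but not non-increasing (it is strictly increasing on `(xₙ, ∞)`), so no
antiderivative of it is concave on `ℝ`. -/
theorem stmt_8 (n : ℕ) (hn : 0 < n) (x : Fin n → ℝ) (hmono : Monotone x)
    (hx1n : x ⟨0, hn⟩ < x ⟨n - 1, Nat.sub_lt hn one_pos⟩)
    (μ v β t : ℝ)
    (hμ : μ = (∑ i, x i) / n) (hv : v = (∑ i, (x i - μ)^2) / n)
    (hvpos : 0 < v) (hβ : β < n)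
    (ht0 : 0 < t) (ht : t ≤ (n - β) / (2 * n * v))
    (f : ℝ → ℝ)
    (hmid : ∀ s : ℝ, x ⟨0, hn⟩ ≤ s → s ≤ x ⟨n - 1, Nat.sub_lt hn one_pos⟩ →
      f s = (β - n) / (n * v) * (s - μ))
    (hleft : ∀ s : ℝ, s < x ⟨0, hn⟩ →
      f s = -(2 * t) * s + ((β - n) / (n * v) + 2 * t) * x ⟨0, hn⟩
        + (n - β) / (n * v) * μ)
    (hright : ∀ s : ℝ, x ⟨n - 1, Nat.sub_lt hn one_pos⟩ < s →
      f s = 2 * t * s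
        - ((n - β) / (n * v) + 2 * t) * x ⟨n - 1, Nat.sub_lt hn one_pos⟩
        + (n - β) / (n * v) * μ) :
    Continuous f ∧ ¬ Antitone f ∧
      StrictMonoOn f (Set.Ioi (x ⟨n - 1, Nat.sub_lt hn one_pos⟩)) ∧
      ∀ F : ℝ → ℝ, (∀ s, HasDerivAt F (f s) s) → ¬ ConcaveOn ℝ Set.univ F := by
  set a := x ⟨0, hn⟩ with ha
  set b := x ⟨n - 1, Nat.sub_lt hn one_pos⟩ with hb
  have hab : a < b := hx1n
  set c : ℝ := (β - n) / (n * v) with hc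
  have hneg : (↑n - β) / (↑n * v) = -c := by rw [hc]; ring
  -- f equals an explicit continuous function
  have hfg : f = fun s => c * (max a (min s b) - μ)
      + 2 * t * (max (s - b) 0 - min (s - a) 0) := by
    funext s
    rcases lt_trichotomy s a with h | h | h
    · rw [hleft s h, min_eq_left (h.trans hab).le, max_eq_left h.le,
        max_eq_right (by linarith), min_eq_left (by linarith), hneg]
      ring
    · rw [hmid s h.ge (by linarith), h, min_eq_left hab.le, max_self,
        max_eq_right (by linarith : a - b ≤ (0:ℝ)), sub_self, min_self]
      ring
    · rcases le_or_gt s b with h2 | h2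
      · rw [hmid s h.le h2, min_eq_left h2, max_eq_right h.le,
          max_eq_right (by linarith), min_eq_right (by linarith)]
        ring
      · rw [hright s h2, min_eq_right h2.le, max_eq_right hab.le,
          max_eq_left (by linarith), min_eq_right (by linarith), hneg]
        ring
  have hcont : Continuous f := by
    rw [hfg]
    exact (continuous_const.mul ((continuous_const.max
        (continuous_id.min continuous_const)).sub continuous_const)).add
      (continuous_const.mul (((continuous_id.sub continuous_const).max
        continuous_const).sub ((continuous_id.sub continuous_const).min
        continuous_const)))
  have hsm : StrictMonoOn f (Set.Ioi b) := by
    intro s1 hs1 s2 hs2 h12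
    rw [hright s1 hs1, hright s2 hs2]
    nlinarith [mul_pos ht0 (sub_pos.2 h12)]
  have hnot : ¬ Antitone f := by
    intro h
    have h1 := h (le_of_lt (lt_add_one b))
    have h2 : f b = c * (b - μ) := hmid b hab.le le_rfl
    have h3 := hright (b + 1) (lt_add_one b)
    rw [hneg] at h3
    nlinarith
  refine ⟨hcont, hnot, hsm, ?_⟩
  intro F hF hconc
  have hFc : Continuous F :=
    continuous_iff_continuousAt.2 fun s => (hF s).continuousAt
  obtain ⟨c1, hc1, hc1'⟩ := exists_hasDerivAt_eq_slope F f
    (show b + 1 < b + 2 by linarith) hFc.continuousOn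
    (fun y _ => hF y)
  obtain ⟨c2, hc2, hc2'⟩ := exists_hasDerivAt_eq_slope F f
    (show b + 2 < b + 3 by linarith) hFc.continuousOn
    (fun y _ => hF y)
  have hslope := hconc.slope_anti_adjacent (Set.mem_univ (b + 1))
    (Set.mem_univ (b + 3)) (show b + 1 < b + 2 by linarith)
    (show b + 2 < b + 3 by linarith)
  have hlt : f c1 < f c2 := hsm (Set.mem_Ioi.2 (by linarith [hc1.1]))
    (Set.mem_Ioi.2 (by linarith [hc2.1])) (by linarith [hc1.2, hc2.1])
  rw [hc1', hc2'] at hlt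
  have e1 : b + 2 - (b + 1) = 1 := by ring
  have e2 : b + 3 - (b + 2) = 1 := by ring
  rw [e1, e2] at hlt hslope
  simp only [div_one] at hlt hslope
  linarith
end

section
/- Let σ: ℝ → ℝ be positively homogeneous of degree 1 (i.e., σ(λt) = λσ(t) for all λ > 0), e.g., ReLU or absolute value. For any w, α, b ∈ ℝ with w ≠ 0 and any λ > 0, the rescaling (w, b, α) ↦ (λw, λb, α/λ) leaves the network output x ↦ σ(wx + b)·α invariant, and the choice λ = √(|α|/|w|) minimizes the penalty (w² + α²)/2 over all such rescalings, achieving value |wα|. Consequently min over rescalings of (β/2)(w²+α²) equals β|w||α|, and one may normalize |w| = 1 with penalty β|α|. -/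
/-- Rescaling lemma: for `σ` positively homogeneous of degree 1, the rescaling
`(w, b, α) ↦ (λw, λb, α/λ)` leaves the neuron output `x ↦ σ(wx + b)·α`
invariant for every `λ > 0`, and `λ₀ = √(|α|/|w|)` minimizes the penalty
`(w² + α²)/2` over all such rescalings, achieving the value `|wα|`;
consequently the minimum of `(β/2)(w² + α²)` over rescalings is `β|w||α|`. -/
theorem stmt_13 (σ : ℝ → ℝ)
    (hσ : ∀ lam : ℝ, 0 < lam → ∀ t : ℝ, σ (lam * t) = lam * σ t)
    (w α b β : ℝ) (hw : w ≠ 0) (hα : α ≠ 0) (hβ : 0 ≤ β) :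
    (∀ lam : ℝ, 0 < lam → ∀ x : ℝ,
      σ (lam * w * x + lam * b) * (α / lam) = σ (w * x + b) * α) ∧
    (((Real.sqrt (|α| / |w|) * w)^2 + (α / Real.sqrt (|α| / |w|))^2) / 2
        = |w * α|) ∧
    (∀ lam : ℝ, 0 < lam →
      |w * α| ≤ ((lam * w)^2 + (α / lam)^2) / 2) ∧
    ((β / 2) * ((Real.sqrt (|α| / |w|) * w)^2
        + (α / Real.sqrt (|α| / |w|))^2) = β * |w| * |α|) ∧
    (∀ lam : ℝ, 0 < lam →
      β * |w| * |α| ≤ (β / 2) * ((lam * w)^2 + (α / lam)^2)) := by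
  have hwpos : 0 < |w| := abs_pos.mpr hw
  have hapos : 0 < |α| := abs_pos.mpr hα
  have hs : 0 < Real.sqrt (|α| / |w|) :=
    Real.sqrt_pos.mpr (div_pos hapos hwpos)
  set s := Real.sqrt (|α| / |w|) with hsdef
  have hs2 : s ^ 2 = |α| / |w| := Real.sq_sqrt (le_of_lt (div_pos hapos hwpos))
  have hw2 : w ^ 2 = |w| ^ 2 := (sq_abs w).symm
  have ha2 : α ^ 2 = |α| ^ 2 := (sq_abs α).symm
  have key : ((s * w) ^ 2 + (α / s) ^ 2) / 2 = |w * α| := by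
    have h1 : (s * w) ^ 2 = |α| * |w| := by
      rw [mul_pow, hs2]
      field_simp
      rw [hw2]
    have h2 : (α / s) ^ 2 = |α| * |w| := by
      rw [div_pow, hs2]
      field_simp
      rw [ha2]
    rw [h1, h2, abs_mul]
    ring
  refine ⟨?_, key, ?_, ?_, ?_⟩
  · intro lam hlam x
    have h1 : lam * w * x + lam * b = lam * (w * x + b) := by ring
    rw [h1, hσ lam hlam]
    field_simp
  · intro lam hlam
    have hwa : lam * w * (α / lam) = w * α := by field_simp
    rcases abs_cases (w * α) with ⟨h, _⟩ | ⟨h, _⟩ <;> rw [h] <;>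
      nlinarith [sq_nonneg (lam * w - α / lam), sq_nonneg (lam * w + α / lam)]
  · rw [show (β / 2) * ((s * w) ^ 2 + (α / s) ^ 2)
        = β * (((s * w) ^ 2 + (α / s) ^ 2) / 2) by ring, key, abs_mul]
    ring
  · intro lam hlam
    have hwa : lam * w * (α / lam) = w * α := by field_simp
    have habs : |w| * |α| = |w * α| := (abs_mul w α).symm
    rcases abs_cases (w * α) with ⟨h, _⟩ | ⟨h, _⟩ <;>
      nlinarith [sq_nonneg (lam * w - α / lam), sq_nonneg (lam * w + α / lam),
        mul_le_mul_of_nonneg_left (le_refl (0:ℝ)) hβ]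
end
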